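/- Let A, B be self-adjoint operators with [A, B] = iħ on a common invariant domain, ψ a vector in the domain with ‖ψ‖ = 1. Then ⟨ψ, A²ψ⟩^{1/2} · ⟨ψ, B²ψ⟩^{1/2} ≥ ħ/2, and if equality holds then ⟨ψ, Aψ⟩ = ⟨ψ, Bψ⟩ = 0. -/

import Mathlib

/-!
Write `a = ⟪ψ, Aψ⟫` and `b = ⟪ψ, Bψ⟫`, both real. Symmetry turns the commutator relation into
`Im ⟪Aψ, Bψ⟫ = ħ/2`, so Cauchy–Schwarz gives `‖Aψ‖ ‖Bψ‖ ≥ ħ/2`; since `⟪ψ, A²ψ⟫ = ‖Aψ‖²`, this is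
the inequality. The centred operators `A - a` and `B - b` are still symmetric and satisfy the same
commutation relation, so the same bound gives the Robertson inequality
`(ħ/2)² ≤ (‖Aψ‖² - a²)(‖Bψ‖² - b²)`. If `‖Aψ‖ ‖Bψ‖ = ħ/2`, expanding the product gives
`a²‖Bψ‖² + b²‖Aψ‖² ≤ a²b²`, and together with `a² ≤ ‖Aψ‖²` this forces `a = b = 0`.
-/

open scoped InnerProductSpace

section

variable {E : Type*} [NormedAddCommGroup E] [InnerProductSpace ℂ E]

lemma norm_sub_re_inner_smul_sq {x : E} (hx : ‖x‖ = 1) (v : E) :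
    ‖v - ((⟪x, v⟫_ℂ).re : ℂ) • x‖ ^ 2 = ‖v‖ ^ 2 - (⟪x, v⟫_ℂ).re ^ 2 := by
  rw [@norm_sub_sq ℂ, inner_smul_right, norm_smul, Complex.norm_real, hx, ← inner_conj_symm v x]
  simp only [RCLike.re_to_complex, Complex.re_ofReal_mul, Complex.conj_re, Real.norm_eq_abs,
    mul_one, sq_abs]
  ring

lemma sq_re_inner_le_sq_norm {x : E} (hx : ‖x‖ = 1) (v : E) : (⟪x, v⟫_ℂ).re ^ 2 ≤ ‖v‖ ^ 2 :=
  sub_nonneg.mp (norm_sub_re_inner_smul_sq hx v ▸ sq_nonneg _)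

lemma LinearMap.apply_apply_sub_apply_apply_sub_smul_id (A B : E →ₗ[ℂ] E) (a b : ℂ) (x : E) :
    (A - a • id : E →ₗ[ℂ] E) ((B - b • id : E →ₗ[ℂ] E) x) -
      (B - b • id : E →ₗ[ℂ] E) ((A - a • id : E →ₗ[ℂ] E) x) = A (B x) - B (A x) := by
  simp only [sub_apply, smul_apply, id_apply, map_sub, map_smul]
  module

lemma eq_zero_of_mul_le_sub_sq_mul_sub_sq {p q a b : ℝ} (hp : 0 < p) (hq : 0 < q)
    (ha : a ^ 2 ≤ p) (h : p * q ≤ (p - a ^ 2) * (q - b ^ 2)) :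
    a = 0 ∧ b = 0 := by
  have hab : a ^ 2 * q + b ^ 2 * p ≤ 0 := by
    nlinarith [mul_le_mul_of_nonneg_right ha (sq_nonneg b)]
  have haq : a ^ 2 * q = 0 :=
    le_antisymm (by nlinarith [mul_nonneg (sq_nonneg b) hp.le]) (by positivity)
  have hbp : b ^ 2 * p = 0 :=
    le_antisymm (by nlinarith [mul_nonneg (sq_nonneg a) hq.le]) (by positivity)
  simp only [mul_eq_zero, hp.ne', hq.ne', or_false, pow_eq_zero_iff two_ne_zero] at haq hbp
  exact ⟨haq, hbp⟩

namespace LinearMap.IsSymmetric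

variable {A B : E →ₗ[ℂ] E}

lemma re_inner_apply_apply (hA : A.IsSymmetric) (x : E) :
    (⟪x, A (A x)⟫_ℂ).re = ‖A x‖ ^ 2 := by
  rw [← hA, inner_self_eq_norm_sq_to_K]
  norm_cast

lemma sqrt_re_inner_apply_apply (hA : A.IsSymmetric) (x : E) :
    √(⟪x, A (A x)⟫_ℂ).re = ‖A x‖ := by
  rw [hA.re_inner_apply_apply, Real.sqrt_sq (norm_nonneg _)]

lemma sub_ofReal_smul_id (hA : A.IsSymmetric) (a : ℝ) : (A - (a : ℂ) • id).IsSymmetric :=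
  hA.sub (IsSymmetric.id.smul (Complex.conj_ofReal a))

lemma two_mul_im_inner_apply_apply (hA : A.IsSymmetric) (hB : B.IsSymmetric) (x : E) :
    2 * (⟪A x, B x⟫_ℂ).im = (⟪x, A (B x) - B (A x)⟫_ℂ).im := by
  rw [inner_sub_right, ← hA x (B x), ← hB x (A x), ← inner_conj_symm (A x) (B x),
    Complex.sub_im, Complex.conj_im]
  ring

theorem le_norm_apply_mul_norm_apply (hA : A.IsSymmetric) (hB : B.IsSymmetric) {hbar : ℝ}
    (hCCR : ∀ x : E, A (B x) - B (A x) = (Complex.I * hbar) • x) (x : E) :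
    hbar / 2 * ‖x‖ ^ 2 ≤ ‖A x‖ * ‖B x‖ := by
  have him : (⟪A x, B x⟫_ℂ).im = hbar / 2 * ‖x‖ ^ 2 := by
    have h := hA.two_mul_im_inner_apply_apply hB x
    rw [hCCR, inner_smul_right, inner_self_eq_norm_sq_to_K] at h
    simp only [Complex.coe_algebraMap, ← Complex.ofReal_pow, Complex.mul_im, Complex.mul_re,
      Complex.I_re, Complex.I_im, Complex.ofReal_re, Complex.ofReal_im] at h
    linarith
  calc hbar / 2 * ‖x‖ ^ 2 = (⟪A x, B x⟫_ℂ).im := him.symm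
    _ ≤ ‖⟪A x, B x⟫_ℂ‖ := Complex.im_le_norm _
    _ ≤ ‖A x‖ * ‖B x‖ := norm_inner_le_norm _ _

theorem sq_le_sub_sq_mul_sub_sq (hA : A.IsSymmetric) (hB : B.IsSymmetric) {hbar : ℝ}
    (hhbar : 0 ≤ hbar) (hCCR : ∀ x : E, A (B x) - B (A x) = (Complex.I * hbar) • x) {x : E}
    (hx : ‖x‖ = 1) :
    (hbar / 2) ^ 2 ≤
      (‖A x‖ ^ 2 - (⟪x, A x⟫_ℂ).re ^ 2) * (‖B x‖ ^ 2 - (⟪x, B x⟫_ℂ).re ^ 2) := by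
  set a := (⟪x, A x⟫_ℂ).re
  set b := (⟪x, B x⟫_ℂ).re
  have hcentred := le_norm_apply_mul_norm_apply (hbar := hbar) (hA.sub_ofReal_smul_id a)
    (hB.sub_ofReal_smul_id b) (fun y => by rw [apply_apply_sub_apply_apply_sub_smul_id, hCCR]) x
  simp only [hx, one_pow, mul_one, sub_apply, smul_apply, id_apply] at hcentred
  rw [← norm_sub_re_inner_smul_sq hx, ← norm_sub_re_inner_smul_sq hx, ← mul_pow]
  exact pow_le_pow_left₀ (by positivity) hcentred 2

end LinearMap.IsSymmetric

end

theorem second_moment_uncertainty_and_unbiasedness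
    {E : Type*} [NormedAddCommGroup E] [InnerProductSpace ℂ E]
    (A B : E →ₗ[ℂ] E) (hA : A.IsSymmetric) (hB : B.IsSymmetric)
    (hbar : ℝ) (hhbar : 0 < hbar)
    (hCCR : ∀ x : E, A (B x) - B (A x) = (Complex.I * hbar) • x)
    (ψ : E) (hψ : ‖ψ‖ = 1) :
    Real.sqrt (⟪ψ, A (A ψ)⟫_ℂ).re * Real.sqrt (⟪ψ, B (B ψ)⟫_ℂ).re ≥ hbar / 2 ∧
    (Real.sqrt (⟪ψ, A (A ψ)⟫_ℂ).re * Real.sqrt (⟪ψ, B (B ψ)⟫_ℂ).re = hbar / 2 →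
      ⟪ψ, A ψ⟫_ℂ = 0 ∧ ⟪ψ, B ψ⟫_ℂ = 0) := by
  rw [hA.sqrt_re_inner_apply_apply, hB.sqrt_re_inner_apply_apply]
  have hbound := hA.le_norm_apply_mul_norm_apply hB hCCR ψ
  rw [hψ, one_pow, mul_one] at hbound
  refine ⟨hbound, fun heq => ?_⟩
  have hrobertson := hA.sq_le_sub_sq_mul_sub_sq hB hhbar.le hCCR hψ
  rw [← heq, mul_pow] at hrobertson
  obtain ⟨hAψ, hBψ⟩ : 0 < ‖A ψ‖ ∧ 0 < ‖B ψ‖ :=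
    (pos_and_pos_or_neg_and_neg_of_mul_pos (heq ▸ half_pos hhbar)).resolve_right
      fun h => (norm_nonneg _).not_gt h.1
  obtain ⟨ha, hb⟩ := eq_zero_of_mul_le_sub_sq_mul_sub_sq (pow_pos hAψ 2) (pow_pos hBψ 2)
    (sq_re_inner_le_sq_norm hψ _) hrobertson
  rw [← hA.coe_re_inner_self_apply, ← hB.coe_re_inner_self_apply]
  simp [ha, hb]
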